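/- arXiv:2011.13502 — 5 statements merged into one kernel-verified Lean document; each statement's English description precedes it below -/
import Mathlib

section
/- (Fictitious space lemma, semi-definite version.) Let V, W be finite-dimensional real inner-product spaces, A : V → V' and à : W → W' symmetric positive semi-definite linear operators with kernels N = N(A) and Ñ = N(Ã), and B̃ : W' → W symmetric positive definite. Let Π : W → V be linear with Π(Ñ) ⊆ N. Suppose there are constants c₀, c₁ > 0 such that (i) |Πw|_A ≤ c₀ |w|_à for all w ∈ W, and (ii) for every v ∈ V there exists w ∈ W with Πw − v ∈ N and |w|_à ≤ c₁ |v|_A. Then B := Π B̃ Π' satisfies κ(BA) ≤ (c₀c₁)² κ(B̃Ã), where κ(BA) denotes the ratio of the maximum to the minimum eigenvalue of the induced operator [B][A] on the quotient V/N. -/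
/-!
With `g := Π' A v` one has `⟨A B A v, v⟩ = ⟨B̃ g, g⟩`, so both bounds are statements about `g`.

Upper bound: `⟨B̃ g, g⟩ = ⟨A v, Π B̃ g⟩ ≤ |v|_A |Π B̃ g|_A ≤ c₀ |v|_A |B̃ g|_Ã` by Cauchy–Schwarz for
the seminorm `|·|_A` and (i), and the upper spectral bound `Mt` of `B̃ Ã` transfers to
`|B̃ g|²_Ã ≤ Mt ⟨B̃ g, g⟩` by Cauchy–Schwarz for `B̃`.

Lower bound: `Π(Ñ) ⊆ N` makes `g` vanish on `Ñ`, so `g = Ã u`. For a lifting `w` of `v` as in (ii),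
`|v|²_A = ⟨Ã w, u⟩ ≤ c₁ |v|_A |u|_Ã`, and `mt |u|²_Ã ≤ ⟨B̃ Ã u, Ã u⟩ = ⟨B̃ g, g⟩`.
-/

open scoped RealInnerProductSpace

open LinearMap

/-- Rayleigh-quotient spectral bounds `m ≤ λ ≤ M` for the operator `[B][A]` induced on the
quotient `V/N(A)`, expressed via the `A`-(semi-)inner product: for every `v`,
`m ⟨Av,v⟩ ≤ ⟨A B A v, v⟩ ≤ M ⟨Av,v⟩`.  (Dual spaces are identified with the underlying
finite-dimensional inner-product space via the Riesz representation.) -/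
def SpecBounds {V : Type*} [NormedAddCommGroup V] [InnerProductSpace ℝ V]
    (A B : V →ₗ[ℝ] V) (m M : ℝ) : Prop :=
  ∀ v : V, m * ⟪A v, v⟫ ≤ ⟪A (B (A v)), v⟫ ∧ ⟪A (B (A v)), v⟫ ≤ M * ⟪A v, v⟫

theorem le_of_sq_le_mul {a b : ℝ} (hb : 0 ≤ b) (h : a ^ 2 ≤ a * b) : a ≤ b := by
  nlinarith

theorem le_sq_mul_of_sqrt_le_mul_sqrt {a b c : ℝ} (hb : 0 ≤ b) (h : √a ≤ c * √b) :
    a ≤ c ^ 2 * b := by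
  rw [← Real.sq_sqrt hb, ← mul_pow]
  exact (Real.sqrt_le_iff.1 h).2

namespace LinearMap

variable {E : Type*} [NormedAddCommGroup E] [InnerProductSpace ℝ E]

theorem isPositive_of_inner_symm {T : E →ₗ[ℝ] E} (hsym : ∀ x y, ⟪T x, y⟫ = ⟪T y, x⟫)
    (hpos : ∀ x, 0 ≤ ⟪T x, x⟫) : T.IsPositive :=
  T.isPositive_iff.2 ⟨fun x y => (hsym x y).trans (real_inner_comm _ _), hpos⟩

theorem IsPositive.inner_sq_le {T : E →ₗ[ℝ] E} (hT : T.IsPositive) (x y : E) :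
    ⟪T x, y⟫ ^ 2 ≤ ⟪T x, x⟫ * ⟪T y, y⟫ := by
  have h := BilinForm.apply_mul_apply_le_of_forall_zero_le (innerₗ E ∘ₗ T)
    hT.inner_nonneg_left x y
  simp only [comp_apply, innerₗ_apply_apply] at h
  rwa [hT.isSymmetric y x, real_inner_comm (T x) y, ← sq] at h

theorem IsPositive.eq_zero_of_inner_map_comp_self_nonpos {F : Type*} [NormedAddCommGroup F]
    [InnerProductSpace ℝ F] {A : E →ₗ[ℝ] E} {P : F →ₗ[ℝ] E} (hA : A.IsPositive)
    (hsurj : ∀ v, ∃ w, P w - v ∈ ker A) (hP : ∀ w, ⟪A (P w), P w⟫ ≤ 0) : A = 0 := by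
  refine hA.isSymmetric.inner_map_self_eq_zero.1 fun v => ?_
  obtain ⟨w, hw⟩ := hsurj v
  rw [mem_ker, map_sub, sub_eq_zero] at hw
  have hv : ⟪A v, v⟫ = ⟪A (P w), P w⟫ := by
    rw [← hw, real_inner_comm, ← hA.isSymmetric, hw]
  exact le_antisymm (hv ▸ hP w) (hA.inner_nonneg_left v)

/-- An upper spectral bound for `B Q` is one for `Q B`. -/
theorem IsSymmetric.inner_map_apply_le {Q B : E →ₗ[ℝ] E} {M : ℝ} (hQ : Q.IsSymmetric)
    (hB : B.IsPositive) (hM : 0 ≤ M) (hQB : ∀ w, ⟪Q (B (Q w)), w⟫ ≤ M * ⟪Q w, w⟫) (g : E) :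
    ⟪Q (B g), B g⟫ ≤ M * ⟪B g, g⟫ := by
  have hx : ⟪Q (B g), B g⟫ = ⟪B (Q (B g)), g⟫ := by
    rw [hB.isSymmetric, real_inner_comm]
  have hy : ⟪B (Q (B g)), Q (B g)⟫ ≤ M * ⟪Q (B g), B g⟫ := hQ _ _ ▸ hQB (B g)
  refine le_of_sq_le_mul (mul_nonneg hM (hB.inner_nonneg_left g)) ?_
  calc ⟪Q (B g), B g⟫ ^ 2 ≤ ⟪B (Q (B g)), Q (B g)⟫ * ⟪B g, g⟫ := hx ▸ hB.inner_sq_le _ g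
    _ ≤ M * ⟪Q (B g), B g⟫ * ⟪B g, g⟫ :=
        mul_le_mul_of_nonneg_right hy (hB.inner_nonneg_left g)
    _ = ⟪Q (B g), B g⟫ * (M * ⟪B g, g⟫) := by ring

end LinearMap

theorem SpecBounds.inner_self_eq_zero_of_lt {E : Type*} [NormedAddCommGroup E]
    [InnerProductSpace ℝ E] {Q B : E →ₗ[ℝ] E} {m M : ℝ} (h : SpecBounds Q B m M)
    (hQ : Q.IsPositive) (hMm : M < m) (w : E) : ⟪Q w, w⟫ = 0 := by
  have := hQ.inner_nonneg_left w
  nlinarith [(h w).1, (h w).2]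

section FictitiousSpace

variable {V W : Type*} [NormedAddCommGroup V] [InnerProductSpace ℝ V] [FiniteDimensional ℝ V]
  [NormedAddCommGroup W] [InnerProductSpace ℝ W] [FiniteDimensional ℝ W]
  {A : V →ₗ[ℝ] V} {At Bt : W →ₗ[ℝ] W} {P : W →ₗ[ℝ] V}

theorem LinearMap.IsSymmetric.inner_comp_adjoint_apply (hA : A.IsSymmetric) (v : V) :
    ⟪A ((P ∘ₗ Bt ∘ₗ P.adjoint) (A v)), v⟫ = ⟪Bt (P.adjoint (A v)), P.adjoint (A v)⟫ := by
  rw [comp_apply, comp_apply, hA, ← adjoint_inner_right]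

theorem adjoint_apply_mem_range (hA : A.IsSymmetric) (hAt : At.IsSymmetric)
    (hker : ∀ w ∈ ker At, P w ∈ ker A) (v : V) : P.adjoint (A v) ∈ range At := by
  rw [← (range At).orthogonal_orthogonal, hAt.orthogonal_range, Submodule.mem_orthogonal]
  intro z hz
  rw [adjoint_inner_right, ← hA, mem_ker.1 (hker z hz), inner_zero_left]

theorem inner_self_sq_le_of_lift (hA : A.IsSymmetric) (hAt : At.IsPositive) {v : V} {w u : W}
    (hw : P w - v ∈ ker A) (hu : At u = P.adjoint (A v)) :
    ⟪A v, v⟫ ^ 2 ≤ ⟪At w, w⟫ * ⟪At u, u⟫ := by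
  rw [mem_ker, map_sub, sub_eq_zero] at hw
  have hv : ⟪A v, v⟫ = ⟪At w, u⟫ := by
    rw [hAt.isSymmetric, hu, adjoint_inner_right, ← hA, hw]
  exact hv ▸ hAt.inner_sq_le w u

theorem mul_inner_self_le_of_lift (hA : A.IsSymmetric) (hAt : At.IsPositive)
    (hker : ∀ w ∈ ker At, P w ∈ ker A) {c₁ mt : ℝ} (hmt : 0 ≤ mt)
    (hlift : ∀ v, ∃ w, P w - v ∈ ker A ∧ ⟪At w, w⟫ ≤ c₁ ^ 2 * ⟪A v, v⟫)
    (hspec : ∀ w, mt * ⟪At w, w⟫ ≤ ⟪At (Bt (At w)), w⟫) (v : V) :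
    mt * ⟪A v, v⟫ ≤ c₁ ^ 2 * ⟪Bt (P.adjoint (A v)), P.adjoint (A v)⟫ := by
  obtain ⟨u, hu⟩ := adjoint_apply_mem_range hA hAt.isSymmetric hker v
  obtain ⟨w, hw, hwv⟩ := hlift v
  have hv : ⟪A v, v⟫ ≤ c₁ ^ 2 * ⟪At u, u⟫ := by
    refine le_of_sq_le_mul (by positivity [hAt.inner_nonneg_left u]) ?_
    calc ⟪A v, v⟫ ^ 2 ≤ ⟪At w, w⟫ * ⟪At u, u⟫ := inner_self_sq_le_of_lift hA hAt hw hu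
      _ ≤ c₁ ^ 2 * ⟪A v, v⟫ * ⟪At u, u⟫ :=
          mul_le_mul_of_nonneg_right hwv (hAt.inner_nonneg_left u)
      _ = ⟪A v, v⟫ * (c₁ ^ 2 * ⟪At u, u⟫) := by ring
  calc mt * ⟪A v, v⟫ ≤ c₁ ^ 2 * (mt * ⟪At u, u⟫) := by nlinarith
    _ ≤ c₁ ^ 2 * ⟪At (Bt (At u)), u⟫ := by gcongr; exact hspec u
    _ = c₁ ^ 2 * ⟪Bt (P.adjoint (A v)), P.adjoint (A v)⟫ := by rw [hAt.isSymmetric, hu]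

theorem inner_le_mul_inner_self_of_bound (hA : A.IsPositive) (hAt : At.IsSymmetric)
    (hBt : Bt.IsPositive) {c₀ Mt : ℝ} (hMt : 0 ≤ Mt)
    (hbound : ∀ w, ⟪A (P w), P w⟫ ≤ c₀ ^ 2 * ⟪At w, w⟫)
    (hspec : ∀ w, ⟪At (Bt (At w)), w⟫ ≤ Mt * ⟪At w, w⟫) (v : V) :
    ⟪Bt (P.adjoint (A v)), P.adjoint (A v)⟫ ≤ c₀ ^ 2 * Mt * ⟪A v, v⟫ := by
  set g := P.adjoint (A v)
  have hg : ⟪Bt g, g⟫ = ⟪A v, P (Bt g)⟫ := by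
    rw [real_inner_comm, adjoint_inner_left]
  have hv := hA.inner_nonneg_left v
  refine le_of_sq_le_mul (by positivity) ?_
  calc ⟪Bt g, g⟫ ^ 2 ≤ ⟪A v, v⟫ * ⟪A (P (Bt g)), P (Bt g)⟫ := hg ▸ hA.inner_sq_le v _
    _ ≤ ⟪A v, v⟫ * (c₀ ^ 2 * ⟪At (Bt g), Bt g⟫) := mul_le_mul_of_nonneg_left (hbound _) hv
    _ ≤ ⟪A v, v⟫ * (c₀ ^ 2 * (Mt * ⟪Bt g, g⟫)) := by
        gcongr; exact hAt.inner_map_apply_le hBt hMt hspec g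
    _ = ⟪Bt g, g⟫ * (c₀ ^ 2 * Mt * ⟪A v, v⟫) := by ring

end FictitiousSpace

theorem stmt2_general {V W : Type*}
    [NormedAddCommGroup V] [InnerProductSpace ℝ V] [FiniteDimensional ℝ V]
    [NormedAddCommGroup W] [InnerProductSpace ℝ W] [FiniteDimensional ℝ W]
    (A : V →ₗ[ℝ] V) (At Bt : W →ₗ[ℝ] W)
    (hAsym : ∀ v w : V, ⟪A v, w⟫ = ⟪A w, v⟫) (hApos : ∀ v : V, 0 ≤ ⟪A v, v⟫)
    (hAtsym : ∀ v w : W, ⟪At v, w⟫ = ⟪At w, v⟫) (hAtpos : ∀ v : W, 0 ≤ ⟪At v, v⟫)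
    (hBtsym : ∀ v w : W, ⟪Bt v, w⟫ = ⟪Bt w, v⟫) (hBtpos : ∀ v : W, 0 ≤ ⟪Bt v, v⟫)
    (P : W →ₗ[ℝ] V)
    (hker : ∀ w ∈ LinearMap.ker At, P w ∈ LinearMap.ker A)
    (c₀ c₁ : ℝ) (hc₁ : 0 < c₁)
    (hbound : ∀ w : W, Real.sqrt ⟪A (P w), P w⟫ ≤ c₀ * Real.sqrt ⟪At w, w⟫)
    (hlift : ∀ v : V, ∃ w : W, P w - v ∈ LinearMap.ker A ∧
      Real.sqrt ⟪At w, w⟫ ≤ c₁ * Real.sqrt ⟪A v, v⟫) :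
    ∀ mt Mt : ℝ, 0 < mt → SpecBounds At Bt mt Mt →
      ∃ m M : ℝ, 0 < m ∧
        SpecBounds A (P ∘ₗ Bt ∘ₗ LinearMap.adjoint P) m M ∧
        M / m ≤ (c₀ * c₁) ^ 2 * (Mt / mt) := by
  intro mt Mt hmt hspec
  have hA := isPositive_of_inner_symm hAsym hApos
  have hAt := isPositive_of_inner_symm hAtsym hAtpos
  have hBt := isPositive_of_inner_symm hBtsym hBtpos
  have hbound' w : ⟪A (P w), P w⟫ ≤ c₀ ^ 2 * ⟪At w, w⟫ :=
    le_sq_mul_of_sqrt_le_mul_sqrt (hAtpos w) (hbound w)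
  have hlift' v : ∃ w, P w - v ∈ ker A ∧ ⟪At w, w⟫ ≤ c₁ ^ 2 * ⟪A v, v⟫ :=
    (hlift v).imp fun _ hw => ⟨hw.1, le_sq_mul_of_sqrt_le_mul_sqrt (hApos v) hw.2⟩
  refine ⟨mt / c₁ ^ 2, c₀ ^ 2 * Mt, by positivity, fun v => ⟨?_, ?_⟩, by field_simp; rfl⟩
  · rw [hA.isSymmetric.inner_comp_adjoint_apply, div_mul_eq_mul_div, div_le_iff₀ (by positivity),
      mul_comm _ (c₁ ^ 2)]
    exact mul_inner_self_le_of_lift hA.isSymmetric hAt hker hmt.le hlift' (hspec · |>.1) v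
  · rcases le_or_gt 0 Mt with hMt | hMt
    · rw [hA.isSymmetric.inner_comp_adjoint_apply]
      exact inner_le_mul_inner_self_of_bound hA hAt.isSymmetric hBt hMt hbound' (hspec · |>.2) v
    · -- `Mt < mt` forces `Ã`, and with it `A`, to vanish.
      have hAt0 := hspec.inner_self_eq_zero_of_lt hAt (hMt.trans hmt)
      have hA0 := hA.eq_zero_of_inner_map_comp_self_nonpos (fun v => (hlift' v).imp fun _ => And.left)
        fun w => by simpa [hAt0] using hbound' w
      simp [hA0]

/-- fictitious space lemma, semi-definite version.  If `A`, `Ã` are symmetric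
positive semi-definite, `B̃` is SPD, `Π` maps `N(Ã)` into `N(A)`, is bounded in energy seminorms
with constant `c₀`, and admits stable liftings modulo kernels with constant `c₁`, then
`B = Π B̃ Π'` satisfies `κ(BA) ≤ (c₀ c₁)² κ(B̃ Ã)`:  any spectral bounds `(mt, Mt)` for `B̃ Ã`
yield spectral bounds `(m, M)` for `B A` on the quotient with `M/m ≤ (c₀c₁)² (Mt/mt)`. -/
theorem stmt2 {V W : Type*}
    [NormedAddCommGroup V] [InnerProductSpace ℝ V] [FiniteDimensional ℝ V]
    [NormedAddCommGroup W] [InnerProductSpace ℝ W] [FiniteDimensional ℝ W]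
    (A : V →ₗ[ℝ] V) (At Bt : W →ₗ[ℝ] W)
    (hAsym : ∀ v w : V, ⟪A v, w⟫ = ⟪A w, v⟫) (hApos : ∀ v : V, 0 ≤ ⟪A v, v⟫)
    (hAtsym : ∀ v w : W, ⟪At v, w⟫ = ⟪At w, v⟫) (hAtpos : ∀ v : W, 0 ≤ ⟪At v, v⟫)
    (hBtsym : ∀ v w : W, ⟪Bt v, w⟫ = ⟪Bt w, v⟫) (hBtpos : ∀ v : W, 0 ≤ ⟪Bt v, v⟫)
    (hBtdef : ∀ v : W, ⟪Bt v, v⟫ = 0 → v = 0)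
    (P : W →ₗ[ℝ] V)
    (hker : ∀ w ∈ LinearMap.ker At, P w ∈ LinearMap.ker A)
    (c₀ c₁ : ℝ) (hc₀ : 0 < c₀) (hc₁ : 0 < c₁)
    (hbound : ∀ w : W, Real.sqrt ⟪A (P w), P w⟫ ≤ c₀ * Real.sqrt ⟪At w, w⟫)
    (hlift : ∀ v : V, ∃ w : W, P w - v ∈ LinearMap.ker A ∧
      Real.sqrt ⟪At w, w⟫ ≤ c₁ * Real.sqrt ⟪A v, v⟫) :
    ∀ mt Mt : ℝ, 0 < mt → SpecBounds At Bt mt Mt →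
      ∃ m M : ℝ, 0 < m ∧
        SpecBounds A (P ∘ₗ Bt ∘ₗ LinearMap.adjoint P) m M ∧
        M / m ≤ (c₀ * c₁) ^ 2 * (Mt / mt) :=
  stmt2_general A At Bt hAsym hApos hAtsym hAtpos hBtsym hBtpos P hker c₀ c₁ hc₁ hbound hlift
end

section
/- (Fictitious space lemma, definite version.) Let V, W be finite-dimensional real inner-product spaces, A : V → V' and à : W → W' symmetric positive definite, B̃ : W' → W symmetric positive definite, and Π : W → V a surjective linear map. Suppose there are constants c₀, c₁ > 0 such that ‖Πw‖_A ≤ c₀ ‖w‖_à for all w ∈ W, and for every v ∈ V some w ∈ W satisfies Πw = v and ‖w‖_à ≤ c₁ ‖v‖_A. Then B := Π B̃ Π' satisfies κ(BA) ≤ (c₀c₁)² κ(B̃Ã). -/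
open scoped RealInnerProductSpace

/-!
With `w₀ := Ã⁻¹ Π' A v` one has `⟪A B A v, v⟫ = ⟪Ã B̃ Ã w₀, w₀⟫`, so the spectral bounds of `B̃Ã`
control the Rayleigh quotient of `BA` once the energies `‖w₀‖²_Ã = ⟪A v, Π w₀⟫` and `‖v‖²_A` are
compared. Cauchy–Schwarz for `A` together with the stability of `Π` gives `‖w₀‖²_Ã ≤ c₀² ‖v‖²_A`;
Cauchy–Schwarz for `Ã` applied to `w₀` and a stable lifting of `v` gives `‖v‖²_A ≤ c₁² ‖w₀‖²_Ã`.
-/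

lemma LinearMap.IsPositive.inner_mul_inner_le {E : Type*} [NormedAddCommGroup E]
    [InnerProductSpace ℝ E] {T : E →ₗ[ℝ] E} (hT : T.IsPositive) (x y : E) :
    ⟪T x, y⟫ * ⟪T y, x⟫ ≤ ⟪T x, x⟫ * ⟪T y, y⟫ :=
  LinearMap.BilinForm.apply_mul_apply_le_of_forall_zero_le ((innerₗ E) ∘ₗ T)
    hT.inner_nonneg_left x y

lemma le_of_mul_self_le_mul {x y : ℝ} (hy : 0 ≤ y) (h : x * x ≤ x * y) : x ≤ y := by
  by_contra! hxy
  nlinarith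

lemma le_sq_mul_of_sqrt_le_mul_sqrt_s3 {x y c : ℝ} (hy : 0 ≤ y) (h : √x ≤ c * √y) :
    x ≤ c ^ 2 * y := by
  have h' := (Real.sqrt_le_iff.1 h).2
  rwa [mul_pow, Real.sq_sqrt hy] at h'

lemma rayleigh_bounds_of_energy_le {mt Mt c₀ c₁ a s x : ℝ} (hmt : 0 ≤ mt) (hc₁ : c₁ ≠ 0)
    (ha : 0 ≤ a) (hs : 0 ≤ s) (hsa : s ≤ c₀ ^ 2 * a) (has : a ≤ c₁ ^ 2 * s)
    (hlo : mt * s ≤ x) (hhi : x ≤ Mt * s) :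
    mt / c₁ ^ 2 * a ≤ x ∧ x ≤ Mt * c₀ ^ 2 * a := by
  constructor
  · calc mt / c₁ ^ 2 * a ≤ mt / c₁ ^ 2 * (c₁ ^ 2 * s) := by gcongr
      _ = mt * s := by field_simp
      _ ≤ x := hlo
  · rcases hs.eq_or_lt with rfl | hs
    · obtain rfl : a = 0 := by linarith
      linarith
    · have hMt : 0 ≤ Mt := by nlinarith
      calc x ≤ Mt * s := hhi
        _ ≤ Mt * (c₀ ^ 2 * a) := by gcongr
        _ = Mt * c₀ ^ 2 * a := by ring

section FictitiousSpace

variable {V W : Type*} [NormedAddCommGroup V] [InnerProductSpace ℝ V] [FiniteDimensional ℝ V]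
  [NormedAddCommGroup W] [InnerProductSpace ℝ W] [FiniteDimensional ℝ W]
  {A : V →ₗ[ℝ] V} {At : W →ₗ[ℝ] W} {P : W →ₗ[ℝ] V} {v : V} {w₀ : W}

lemma inner_comp_adjoint_eq (hA : A.IsPositive) (hAt : At.IsPositive) (Bt : W →ₗ[ℝ] W)
    (hw₀ : At w₀ = LinearMap.adjoint P (A v)) :
    ⟪A ((P ∘ₗ Bt ∘ₗ LinearMap.adjoint P) (A v)), v⟫ = ⟪At (Bt (At w₀)), w₀⟫ := by
  rw [LinearMap.comp_apply, LinearMap.comp_apply, hA.isSymmetric,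
    ← LinearMap.adjoint_inner_right, ← hw₀, hAt.isSymmetric]

lemma energy_le_of_stable (hA : A.IsPositive) {c : ℝ}
    (hbound : ⟪A (P w₀), P w₀⟫ ≤ c ^ 2 * ⟪At w₀, w₀⟫)
    (hw₀ : At w₀ = LinearMap.adjoint P (A v)) :
    ⟪At w₀, w₀⟫ ≤ c ^ 2 * ⟪A v, v⟫ := by
  have hs : ⟪At w₀, w₀⟫ = ⟪A v, P w₀⟫ := by rw [hw₀, LinearMap.adjoint_inner_left]
  have hs' : ⟪At w₀, w₀⟫ = ⟪A (P w₀), v⟫ := by rw [hs, hA.isSymmetric, real_inner_comm]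
  refine le_of_mul_self_le_mul (mul_nonneg (sq_nonneg c) (hA.inner_nonneg_left v)) ?_
  calc ⟪At w₀, w₀⟫ * ⟪At w₀, w₀⟫ = ⟪A v, P w₀⟫ * ⟪A (P w₀), v⟫ := by rw [← hs, ← hs']
    _ ≤ ⟪A v, v⟫ * ⟪A (P w₀), P w₀⟫ := hA.inner_mul_inner_le v (P w₀)
    _ ≤ ⟪A v, v⟫ * (c ^ 2 * ⟪At w₀, w₀⟫) := by gcongr; exact hA.inner_nonneg_left v
    _ = ⟪At w₀, w₀⟫ * (c ^ 2 * ⟪A v, v⟫) := by ring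

lemma energy_le_of_lift (hAt : At.IsPositive) {c : ℝ} {w : W}
    (hPw : P w = v) (hw : ⟪At w, w⟫ ≤ c ^ 2 * ⟪A v, v⟫)
    (hw₀ : At w₀ = LinearMap.adjoint P (A v)) :
    ⟪A v, v⟫ ≤ c ^ 2 * ⟪At w₀, w₀⟫ := by
  have ha : ⟪A v, v⟫ = ⟪At w₀, w⟫ := by rw [hw₀, LinearMap.adjoint_inner_left, hPw]
  have ha' : ⟪A v, v⟫ = ⟪At w, w₀⟫ := by rw [ha, hAt.isSymmetric, real_inner_comm]
  refine le_of_mul_self_le_mul (mul_nonneg (sq_nonneg c) (hAt.inner_nonneg_left w₀)) ?_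
  calc ⟪A v, v⟫ * ⟪A v, v⟫ = ⟪At w₀, w⟫ * ⟪At w, w₀⟫ := by rw [← ha, ← ha']
    _ ≤ ⟪At w₀, w₀⟫ * ⟪At w, w⟫ := hAt.inner_mul_inner_le w₀ w
    _ ≤ ⟪At w₀, w₀⟫ * (c ^ 2 * ⟪A v, v⟫) := by gcongr; exact hAt.inner_nonneg_left w₀
    _ = ⟪A v, v⟫ * (c ^ 2 * ⟪At w₀, w₀⟫) := by ring

theorem specBounds_comp_adjoint (hA : A.IsPositive) (hAt : At.IsPositive)
    (hAt_surj : Function.Surjective At) {Bt : W →ₗ[ℝ] W} {c₀ c₁ mt Mt : ℝ}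
    (hc₁ : c₁ ≠ 0) (hmt : 0 ≤ mt)
    (hbound : ∀ w, ⟪A (P w), P w⟫ ≤ c₀ ^ 2 * ⟪At w, w⟫)
    (hlift : ∀ v, ∃ w, P w = v ∧ ⟪At w, w⟫ ≤ c₁ ^ 2 * ⟪A v, v⟫)
    (hspec : SpecBounds At Bt mt Mt) :
    SpecBounds A (P ∘ₗ Bt ∘ₗ LinearMap.adjoint P) (mt / c₁ ^ 2) (Mt * c₀ ^ 2) := by
  intro v
  obtain ⟨w₀, hw₀⟩ := hAt_surj (LinearMap.adjoint P (A v))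
  obtain ⟨w, hPw, hw⟩ := hlift v
  rw [inner_comp_adjoint_eq hA hAt Bt hw₀]
  exact rayleigh_bounds_of_energy_le hmt hc₁ (hA.inner_nonneg_left v) (hAt.inner_nonneg_left w₀)
    (energy_le_of_stable hA (hbound w₀) hw₀)
    (energy_le_of_lift hAt hPw hw hw₀) (hspec w₀).1 (hspec w₀).2

end FictitiousSpace

theorem stmt3_general {V W : Type*}
    [NormedAddCommGroup V] [InnerProductSpace ℝ V] [FiniteDimensional ℝ V]
    [NormedAddCommGroup W] [InnerProductSpace ℝ W] [FiniteDimensional ℝ W]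
    (A : V →ₗ[ℝ] V) (At Bt : W →ₗ[ℝ] W)
    (hAsym : ∀ v w : V, ⟪A v, w⟫ = ⟪A w, v⟫) (hApos : ∀ v : V, 0 ≤ ⟪A v, v⟫)
    (hAtsym : ∀ v w : W, ⟪At v, w⟫ = ⟪At w, v⟫) (hAtpos : ∀ v : W, 0 ≤ ⟪At v, v⟫)
    (hAtdef : ∀ v : W, ⟪At v, v⟫ = 0 → v = 0)
    (P : W →ₗ[ℝ] V)
    (c₀ c₁ : ℝ) (hc₁ : 0 < c₁)
    (hbound : ∀ w : W, Real.sqrt ⟪A (P w), P w⟫ ≤ c₀ * Real.sqrt ⟪At w, w⟫)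
    (hlift : ∀ v : V, ∃ w : W, P w = v ∧
      Real.sqrt ⟪At w, w⟫ ≤ c₁ * Real.sqrt ⟪A v, v⟫) :
    ∀ mt Mt : ℝ, 0 < mt → SpecBounds At Bt mt Mt →
      ∃ m M : ℝ, 0 < m ∧
        SpecBounds A (P ∘ₗ Bt ∘ₗ LinearMap.adjoint P) m M ∧
        M / m ≤ (c₀ * c₁) ^ 2 * (Mt / mt) := by
  intro mt Mt hmt hspec
  have hA : A.IsPositive :=
    (A.isPositive_iff).2 ⟨fun v w => (hAsym v w).trans (real_inner_comm _ _), hApos⟩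
  have hAt : At.IsPositive :=
    (At.isPositive_iff).2 ⟨fun v w => (hAtsym v w).trans (real_inner_comm _ _), hAtpos⟩
  have hAt_surj : Function.Surjective At := by
    refine LinearMap.injective_iff_surjective.1 ?_
    rw [← LinearMap.ker_eq_bot, LinearMap.ker_eq_bot']
    exact fun w hw => hAtdef w (by simp [hw])
  refine ⟨mt / c₁ ^ 2, Mt * c₀ ^ 2, by positivity,
    specBounds_comp_adjoint hA hAt hAt_surj hc₁.ne' hmt.le
      (fun w => le_sq_mul_of_sqrt_le_mul_sqrt_s3 (hAtpos w) (hbound w))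
      (fun v => (hlift v).imp fun w ⟨hPw, hw⟩ =>
        ⟨hPw, le_sq_mul_of_sqrt_le_mul_sqrt_s3 (hApos v) hw⟩) hspec,
    le_of_eq (by field_simp)⟩

/-- fictitious space lemma, definite version.  If `A`, `Ã`, `B̃` are SPD,
`Π : W → V` is surjective, `‖Πw‖_A ≤ c₀‖w‖_Ã`, and every `v` has a lifting `w` with `Πw = v`
and `‖w‖_Ã ≤ c₁‖v‖_A`, then `B = Π B̃ Π'` satisfies `κ(BA) ≤ (c₀c₁)² κ(B̃Ã)`. -/
theorem stmt3 {V W : Type*}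
    [NormedAddCommGroup V] [InnerProductSpace ℝ V] [FiniteDimensional ℝ V]
    [NormedAddCommGroup W] [InnerProductSpace ℝ W] [FiniteDimensional ℝ W]
    (A : V →ₗ[ℝ] V) (At Bt : W →ₗ[ℝ] W)
    (hAsym : ∀ v w : V, ⟪A v, w⟫ = ⟪A w, v⟫) (hApos : ∀ v : V, 0 ≤ ⟪A v, v⟫)
    (hAdef : ∀ v : V, ⟪A v, v⟫ = 0 → v = 0)
    (hAtsym : ∀ v w : W, ⟪At v, w⟫ = ⟪At w, v⟫) (hAtpos : ∀ v : W, 0 ≤ ⟪At v, v⟫)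
    (hAtdef : ∀ v : W, ⟪At v, v⟫ = 0 → v = 0)
    (hBtsym : ∀ v w : W, ⟪Bt v, w⟫ = ⟪Bt w, v⟫) (hBtpos : ∀ v : W, 0 ≤ ⟪Bt v, v⟫)
    (hBtdef : ∀ v : W, ⟪Bt v, v⟫ = 0 → v = 0)
    (P : W →ₗ[ℝ] V) (hsurj : Function.Surjective P)
    (c₀ c₁ : ℝ) (hc₀ : 0 < c₀) (hc₁ : 0 < c₁)
    (hbound : ∀ w : W, Real.sqrt ⟪A (P w), P w⟫ ≤ c₀ * Real.sqrt ⟪At w, w⟫)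
    (hlift : ∀ v : V, ∃ w : W, P w = v ∧
      Real.sqrt ⟪At w, w⟫ ≤ c₁ * Real.sqrt ⟪A v, v⟫) :
    ∀ mt Mt : ℝ, 0 < mt → SpecBounds At Bt mt Mt →
      ∃ m M : ℝ, 0 < m ∧
        SpecBounds A (P ∘ₗ Bt ∘ₗ LinearMap.adjoint P) m M ∧
        M / m ≤ (c₀ * c₁) ^ 2 * (Mt / mt) :=
  stmt3_general A At Bt hAsym hApos hAtsym hAtpos hAtdef P c₀ c₁ hc₁ hbound hlift
end

section
/- Let V be a finite-dimensional real inner-product space, A : V → V' symmetric positive semi-definite with kernel N, and B : V' → V symmetric positive definite. In the preconditioned conjugate gradient algorithm applied to Au = f with compatible data f (i.e., f vanishes on N), every residual r_k lies in the polar set of N, every search direction p_k satisfies (p_k, z)_{B⁻¹} = 0 for all z ∈ N, and consequently |p_k|_A ≠ 0 whenever r_k ≠ 0; thus the algorithm is well defined for the semi-definite operator A. -/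
/-!
Write `N = ker A`. Since `A` is symmetric its range is orthogonal to `N`, so by compatibility of `f`
every residual stays in `Nᗮ`, and then so does `B⁻¹ p_k`, a combination of residuals. A vanishing
energy `|p_k|_A = 0` forces `A p_k = 0` by positivity, i.e. `p_k ∈ N`; together with
`B⁻¹ p_k ∈ Nᗮ` this gives `(B⁻¹ p_k, B B⁻¹ p_k) = 0`, hence `p_k = 0` by definiteness of `B`.
Finally, the usual identity `⟨r_k, p_k⟩ = ⟨r_k, B r_k⟩` turns `p_k = 0` into `r_k = 0`.
-/

open scoped RealInnerProductSpace

section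

open LinearMap Submodule

variable {V : Type*} [NormedAddCommGroup V] [InnerProductSpace ℝ V]

/-- Test positivity on `v = (c + 1) • x - a • T x` with `a = ‖T x‖²`, `c = ⟪T (T x), T x⟫`:
there `⟪T v, v⟫ = -a² (c + 2)`. -/
theorem LinearMap.IsPositive.apply_eq_zero_of_inner_self_eq_zero {T : V →ₗ[ℝ] V}
    (hT : T.IsPositive) {x : V} (hx : ⟪T x, x⟫ = 0) : T x = 0 := by
  set a := ⟪T x, T x⟫
  set c := ⟪T (T x), T x⟫
  have hc : 0 ≤ c := hT.inner_nonneg_left (T x)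
  have hv : ⟪T ((c + 1) • x - a • T x), (c + 1) • x - a • T x⟫ = -(a ^ 2 * (c + 2)) := by
    have hswap : ⟪T (T x), x⟫ = a := hT.isSymmetric (T x) x
    simp only [map_sub, map_smul, inner_sub_left, inner_sub_right, real_inner_smul_left,
      real_inner_smul_right, hx, hswap]
    ring
  have ha : a ^ 2 * (c + 2) ≤ 0 := by linarith [hT.inner_nonneg_left ((c + 1) • x - a • T x)]
  have ha2 : a ^ 2 = 0 := le_antisymm (nonpos_of_mul_nonpos_left ha (by linarith)) (sq_nonneg a)
  exact inner_self_eq_zero.mp (pow_eq_zero_iff two_ne_zero |>.mp ha2)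

theorem eq_zero_of_mem_of_inverse_mem_orthogonal {B Binv : V →ₗ[ℝ] V}
    (hBdef : ∀ v : V, ⟪B v, v⟫ = 0 → v = 0) (hBBinv : ∀ v : V, B (Binv v) = v)
    {K : Submodule ℝ V} {q : V} (hq : q ∈ K) (hBinvq : Binv q ∈ Kᗮ) : q = 0 := by
  have hzero : Binv q = 0 := hBdef _ <| by
    rw [hBBinv, real_inner_comm]
    exact (mem_orthogonal' _ _).mp hBinvq q hq
  rw [← hBBinv q, hzero, map_zero]

variable {A B Binv : V →ₗ[ℝ] V} {f : V} {u r z p : ℕ → V} {α β : ℕ → ℝ}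

theorem pcg_residual_mem_orthogonal_ker (hA : A.IsSymmetric) (hf : f ∈ (ker A)ᗮ)
    (hr0 : r 0 = f - A (u 0)) (hr : ∀ k, r (k + 1) = r k - α k • A (p k)) (k : ℕ) :
    r k ∈ (ker A)ᗮ := by
  have hrange : ∀ v, A v ∈ (ker A)ᗮ := fun v =>
    hA.orthogonal_range ▸ le_orthogonal_orthogonal _ (mem_range_self A v)
  induction k with
  | zero => exact hr0 ▸ sub_mem hf (hrange _)
  | succ k ih => exact hr k ▸ sub_mem ih (smul_mem _ _ (hrange _))

theorem pcg_inverse_direction_mem {K : Submodule ℝ V} (hrK : ∀ k, r k ∈ K)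
    (hBinv : ∀ v : V, Binv (B v) = v) (hz : ∀ k, z k = B (r k)) (hp0 : p 0 = z 0)
    (hp : ∀ k, p (k + 1) = z (k + 1) + β k • p k) (k : ℕ) : Binv (p k) ∈ K := by
  induction k with
  | zero => simpa only [hp0, hz, hBinv] using hrK 0
  | succ k ih =>
    rw [hp, map_add, map_smul, hz, hBinv]
    exact add_mem (hrK _) (smul_mem _ _ ih)

/-- Once directions of zero energy are known to vanish, the junk value `α_k = 0` of a zero
denominator is harmless and the residual `r_{k+1}` is orthogonal to `p_k`. -/
theorem pcg_inner_residual_direction (hpzero : ∀ k, ⟪A (p k), p k⟫ = 0 → p k = 0)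
    (hp0 : p 0 = z 0) (hα : ∀ k, α k = ⟪r k, z k⟫ / ⟪A (p k), p k⟫)
    (hr : ∀ k, r (k + 1) = r k - α k • A (p k)) (hp : ∀ k, p (k + 1) = z (k + 1) + β k • p k)
    (k : ℕ) : ⟪r k, p k⟫ = ⟪r k, z k⟫ := by
  induction k with
  | zero => rw [hp0]
  | succ k ih =>
    have horth : ⟪r (k + 1), p k⟫ = 0 := by
      by_cases hpk : p k = 0
      · rw [hpk, inner_zero_right]
      have hE : ⟪A (p k), p k⟫ ≠ 0 := fun h => hpk (hpzero k h)
      rw [hr, inner_sub_left, real_inner_smul_left, hα,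
        div_mul_cancel₀ _ hE, ih, sub_self]
    rw [hp, inner_add_right, real_inner_smul_right, horth, mul_zero, add_zero]

end

theorem stmt4_general {V : Type*} [NormedAddCommGroup V] [InnerProductSpace ℝ V]
    [FiniteDimensional ℝ V]
    (A B Binv : V →ₗ[ℝ] V)
    (hAsym : ∀ v w : V, ⟪A v, w⟫ = ⟪A w, v⟫) (hApos : ∀ v : V, 0 ≤ ⟪A v, v⟫)
    (hBdef : ∀ v : V, ⟪B v, v⟫ = 0 → v = 0)
    (hBinv : ∀ v : V, Binv (B v) = v)
    (f : V) (hcompat : ∀ n ∈ LinearMap.ker A, ⟪f, n⟫ = 0)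
    (u r z p : ℕ → V) (α β : ℕ → ℝ)
    (hr0 : r 0 = f - A (u 0))
    (hz : ∀ k, z k = B (r k))
    (hp0 : p 0 = z 0)
    (hα : ∀ k, α k = ⟪r k, z k⟫ / ⟪A (p k), p k⟫)
    (hr : ∀ k, r (k + 1) = r k - α k • A (p k))
    (hp : ∀ k, p (k + 1) = z (k + 1) + β k • p k) :
    ∀ k : ℕ,
      (∀ n ∈ LinearMap.ker A, ⟪r k, n⟫ = 0) ∧
      (∀ n ∈ LinearMap.ker A, ⟪Binv (p k), n⟫ = 0) ∧
      (r k ≠ 0 → ⟪A (p k), p k⟫ ≠ 0) := by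
  have hA : A.IsPositive :=
    A.isPositive_iff.mpr ⟨fun v w => (hAsym v w).trans (real_inner_comm _ _), hApos⟩
  have hBBinv : ∀ v, B (Binv v) = v :=
    LinearMap.ext_iff.mp ((LinearMap.comp_eq_id_comm ℝ V).mpr (LinearMap.ext hBinv))
  have hres := pcg_residual_mem_orthogonal_ker hA.isSymmetric
    ((Submodule.mem_orthogonal' _ _).mpr hcompat) hr0 hr
  have hdir := pcg_inverse_direction_mem hres hBinv hz hp0 hp
  have hpzero : ∀ k, ⟪A (p k), p k⟫ = 0 → p k = 0 := fun k hE =>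
    eq_zero_of_mem_of_inverse_mem_orthogonal hBdef hBBinv
      (hA.apply_eq_zero_of_inner_self_eq_zero hE) (hdir k)
  intro k
  refine ⟨(Submodule.mem_orthogonal' _ _).mp (hres k),
    (Submodule.mem_orthogonal' _ _).mp (hdir k), fun hrk hE => hrk (hBdef _ ?_)⟩
  calc ⟪B (r k), r k⟫ = ⟪r k, z k⟫ := by rw [hz, real_inner_comm]
    _ = ⟪r k, p k⟫ := (pcg_inner_residual_direction hpzero hp0 hα hr hp k).symm
    _ = 0 := by rw [hpzero k hE, inner_zero_right]

/-- In the preconditioned conjugate gradient algorithm for a symmetric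
positive semi-definite operator `A` with SPD preconditioner `B` (dual spaces identified with
`V` via Riesz; `Binv` is the inverse of `B`) and compatible data `f` (vanishing on `N = ker A`),
every residual `r_k` lies in the polar set of `N`, every search direction satisfies
`(p_k, z)_{B⁻¹} = 0` for `z ∈ N`, and consequently `|p_k|_A ≠ 0` whenever `r_k ≠ 0`; thus the
algorithm is well defined for the semi-definite operator `A`. -/
theorem stmt4 {V : Type*} [NormedAddCommGroup V] [InnerProductSpace ℝ V]
    [FiniteDimensional ℝ V]
    (A B Binv : V →ₗ[ℝ] V)
    (hAsym : ∀ v w : V, ⟪A v, w⟫ = ⟪A w, v⟫) (hApos : ∀ v : V, 0 ≤ ⟪A v, v⟫)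
    (hBsym : ∀ v w : V, ⟪B v, w⟫ = ⟪B w, v⟫) (hBpos : ∀ v : V, 0 ≤ ⟪B v, v⟫)
    (hBdef : ∀ v : V, ⟪B v, v⟫ = 0 → v = 0)
    (hBinv : ∀ v : V, Binv (B v) = v)
    (f : V) (hcompat : ∀ n ∈ LinearMap.ker A, ⟪f, n⟫ = 0)
    (u r z p : ℕ → V) (α β : ℕ → ℝ)
    (hr0 : r 0 = f - A (u 0))
    (hz : ∀ k, z k = B (r k))
    (hp0 : p 0 = z 0)
    (hα : ∀ k, α k = ⟪r k, z k⟫ / ⟪A (p k), p k⟫)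
    (hu : ∀ k, u (k + 1) = u k + α k • p k)
    (hr : ∀ k, r (k + 1) = r k - α k • A (p k))
    (hβ : ∀ k, β k = ⟪r (k + 1), z (k + 1)⟫ / ⟪r k, z k⟫)
    (hp : ∀ k, p (k + 1) = z (k + 1) + β k • p k) :
    ∀ k : ℕ,
      (∀ n ∈ LinearMap.ker A, ⟪r k, n⟫ = 0) ∧
      (∀ n ∈ LinearMap.ker A, ⟪Binv (p k), n⟫ = 0) ∧
      (r k ≠ 0 → ⟪A (p k), p k⟫ ≠ 0) :=
  stmt4_general A B Binv hAsym hApos hBdef hBinv f hcompat u r z p α β hr0 hz hp0 hα hr hp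
end

section
/- (Jacobi–Gauss–Seidel symmetrization equivalence.) Let à be a symmetric positive definite n×n real matrix with diagonal D and strictly lower-triangular part L, so à = D + L + Lᵀ. Let S = (D+L)⁻¹ be the forward Gauss–Seidel operator and S̄ = Sᵀ + S − Sᵀ Ã S its symmetrization. Then S̄ = (D+L)⁻ᵀ D (D+L)⁻¹, S̄ is symmetric positive definite, and if the number of nonzero off-diagonal entries in each row of à is at most N₀ then vᵀ S̄⁻¹ v is equivalent to vᵀ D v uniformly: c(N₀)⁻¹ vᵀDv ≤ vᵀS̄⁻¹v ≤ c(N₀) vᵀDv for all v ∈ ℝⁿ, with c(N₀) depending only on N₀ (via the bound on the spectral norm of D^{-1/2}(D+L)D^{-1/2}). -/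
/-!
With `B = D + L`, symmetry of `Ã` gives `Ã = B + Bᵀ - D`, which collapses the symmetrization to
`S̄ = B⁻ᵀ D B⁻¹`; hence `S̄⁻¹ = B D⁻¹ Bᵀ` and `vᵀ S̄⁻¹ v = ∑ₖ (Bᵀ v)ₖ² / dₖ`.
Positivity of `Ã` gives `vᵀ D v ≤ 2 vᵀ Bᵀ v`, and the weighted AM–GM inequality
`vᵀ u ≤ vᵀ D v / 4 + uᵀ D⁻¹ u` turns this into `vᵀ D v ≤ 4 vᵀ S̄⁻¹ v`.
The upper bound `(N₀ + 1)² vᵀ D v` is a Schur test: every row and column of `B` has at most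
`N₀ + 1` nonzero entries, and `ãᵢⱼ² ≤ ãᵢᵢ ãⱼⱼ`.
-/

open Matrix Finset

section Sums

variable {ι : Type*} [Fintype ι]

theorem sum_mul_le_sum_mul_sq_div_four_add_sum_sq_div {d : ι → ℝ} (hd : ∀ i, 0 < d i)
    (u v : ι → ℝ) :
    ∑ i, v i * u i ≤ (∑ i, d i * v i ^ 2) / 4 + ∑ i, u i ^ 2 / d i := by
  rw [sum_div, ← sum_add_distrib]
  refine sum_le_sum fun i _ => ?_
  have hsq : 0 ≤ (d i * v i / 2 - u i) ^ 2 / d i := div_nonneg (sq_nonneg _) (hd i).le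
  have hexp :
      (d i * v i / 2 - u i) ^ 2 / d i = d i * v i ^ 2 / 4 + u i ^ 2 / d i - v i * u i := by
    field_simp [(hd i).ne']
    ring
  linarith

theorem sq_sum_le_card_mul_sum_sq_of_support_subset {s : Finset ι} {f : ι → ℝ}
    (hf : ∀ i ∉ s, f i = 0) : (∑ i, f i) ^ 2 ≤ #s * ∑ i, f i ^ 2 := by
  rw [← sum_subset (subset_univ s) fun i _ hi => hf i hi,
    ← sum_subset (subset_univ s) fun i _ hi => by simp [hf i hi]]
  exact sq_sum_le_card_mul_sum_sq

theorem sum_le_card_mul_of_support_subset {s : Finset ι} {f : ι → ℝ} {c : ℝ}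
    (hf : ∀ i ∉ s, f i = 0) (hc : ∀ i ∈ s, f i ≤ c) : ∑ i, f i ≤ #s * c := by
  rw [← sum_subset (subset_univ s) fun i _ hi => hf i hi, ← nsmul_eq_mul]
  exact sum_le_card_nsmul s f c hc

theorem card_filter_le_succ_of_ncard_ne_le [DecidableEq ι] {p : ι → Prop} [DecidablePred p]
    {i : ι} {N : ℕ} (h : {j | j ≠ i ∧ p j}.ncard ≤ N) : #{j | p j} ≤ N + 1 := by
  have hsub : ({j | p j} : Finset ι) ⊆ insert i ({j | j ≠ i ∧ p j} : Finset ι) := by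
    intro j hj
    by_cases hji : j = i <;> simp_all
  rw [Set.ncard_eq_toFinset_card', Set.toFinset_ofPred] at h
  exact (card_le_card hsub).trans ((card_insert_le _ _).trans (by omega))

end Sums

namespace Matrix

section Symmetrization

variable {ι R : Type*} [Fintype ι] [DecidableEq ι] [CommRing R]

def symmetrization (A S : Matrix ι ι R) : Matrix ι ι R :=
  Sᵀ + S - Sᵀ * A * S

theorem symmetrization_inv_eq {A B D : Matrix ι ι R} (hA : A = B + Bᵀ - D)
    (hB : IsUnit B.det) : symmetrization A B⁻¹ = B⁻¹ᵀ * D * B⁻¹ := by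
  have hBB : B * B⁻¹ = 1 := mul_nonsing_inv B hB
  have hBB' : B⁻¹ᵀ * Bᵀ = 1 := by rw [← transpose_mul, hBB, transpose_one]
  rw [symmetrization, hA, Matrix.mul_sub, Matrix.mul_add, Matrix.sub_mul, Matrix.add_mul,
    Matrix.mul_assoc _ B, hBB, hBB', Matrix.mul_one, Matrix.one_mul]
  abel

theorem inv_transpose_inv_mul_mul_inv {B : Matrix ι ι R} (D : Matrix ι ι R)
    (hB : IsUnit B.det) : (B⁻¹ᵀ * D * B⁻¹)⁻¹ = B * D⁻¹ * Bᵀ := by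
  rw [Matrix.mul_inv_rev, Matrix.mul_inv_rev, nonsing_inv_nonsing_inv B hB,
    ← transpose_nonsing_inv, nonsing_inv_nonsing_inv B hB, Matrix.mul_assoc]

theorem dotProduct_diagonal_mulVec_self (d v : ι → R) :
    v ⬝ᵥ diagonal d *ᵥ v = ∑ i, d i * v i ^ 2 := by
  simp only [dotProduct, mulVec_diagonal]
  exact sum_congr rfl fun i _ => by ring

end Symmetrization

theorem inv_diagonal_of_ne_zero {ι K : Type*} [Fintype ι] [DecidableEq ι] [Field K]
    {d : ι → K} (hd : ∀ i, d i ≠ 0) : (diagonal d)⁻¹ = diagonal d⁻¹ := by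
  refine inv_eq_right_inv ?_
  rw [diagonal_mul_diagonal, ← diagonal_one]
  exact congrArg diagonal (funext fun i => mul_inv_cancel₀ (hd i))

theorem PosSemidef.sq_apply_le {ι : Type*} {A : Matrix ι ι ℝ} (hA : A.PosSemidef) (i j : ι) :
    A i j ^ 2 ≤ A i i * A j j := by
  have h := (hA.submatrix ![i, j]).det_nonneg
  rw [det_fin_two] at h
  simp only [submatrix_apply, Matrix.cons_val_zero, Matrix.cons_val_one] at h
  have hji : A j i = A i j := by simpa using hA.isHermitian.apply i j
  rw [hji, ← sq] at h
  linarith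

section Real

variable {ι : Type*} [Fintype ι]

theorem PosDef.transpose_inv_mul_mul_inv [DecidableEq ι] {B D : Matrix ι ι ℝ} (hD : D.PosDef)
    (hB : IsUnit B.det) : (B⁻¹ᵀ * D * B⁻¹).PosDef := by
  have hinj : Function.Injective B⁻¹.mulVec :=
    mulVec_injective_iff_isUnit.2 ((isUnit_iff_isUnit_det _).2 (isUnit_nonsing_inv_det B hB))
  simpa [conjTranspose_eq_transpose_of_trivial] using hD.conjTranspose_mul_mul_same hinj

theorem dotProduct_mul_inv_diagonal_mul_transpose_mulVec_self [DecidableEq ι]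
    (B : Matrix ι ι ℝ) {d : ι → ℝ} (hd : ∀ i, d i ≠ 0) (v : ι → ℝ) :
    v ⬝ᵥ (B * (diagonal d)⁻¹ * Bᵀ) *ᵥ v = ∑ i, (Bᵀ *ᵥ v) i ^ 2 / d i := by
  rw [← mulVec_mulVec, ← mulVec_mulVec, dotProduct_mulVec, ← mulVec_transpose,
    inv_diagonal_of_ne_zero hd, dotProduct_diagonal_mulVec_self]
  exact sum_congr rfl fun i _ => by simp [div_eq_inv_mul]

theorem PosSemidef.dotProduct_mulVec_le_two_mul {A B D : Matrix ι ι ℝ} (hA : A.PosSemidef)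
    (hAB : A = B + Bᵀ - D) (v : ι → ℝ) :
    v ⬝ᵥ D *ᵥ v ≤ 2 * (v ⬝ᵥ Bᵀ *ᵥ v) := by
  have h := hA.dotProduct_mulVec_nonneg v
  have hB : v ⬝ᵥ B *ᵥ v = v ⬝ᵥ Bᵀ *ᵥ v := by
    rw [mulVec_transpose, dotProduct_mulVec, dotProduct_comm]
  rw [star_trivial, hAB, sub_mulVec, add_mulVec, dotProduct_sub, dotProduct_add, hB] at h
  linarith

theorem PosSemidef.sum_mul_sq_le_four_mul_sum_sq_transpose_mulVec_div [DecidableEq ι]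
    {A B : Matrix ι ι ℝ} {d : ι → ℝ} (hA : A.PosSemidef) (hAB : A = B + Bᵀ - diagonal d)
    (hd : ∀ i, 0 < d i) (v : ι → ℝ) :
    ∑ i, d i * v i ^ 2 ≤ 4 * ∑ i, (Bᵀ *ᵥ v) i ^ 2 / d i := by
  have h₁ := hA.dotProduct_mulVec_le_two_mul hAB v
  have h₂ := sum_mul_le_sum_mul_sq_div_four_add_sum_sq_div hd (Bᵀ *ᵥ v) v
  rw [dotProduct_diagonal_mulVec_self, dotProduct] at h₁
  linarith

theorem sum_sq_mulVec_div_le {N : Matrix ι ι ℝ} {d : ι → ℝ} {m : ℕ} (hd : ∀ i, 0 < d i)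
    (hN : ∀ i j, N i j ^ 2 ≤ d i * d j) (hrow : ∀ i, #{j | N i j ≠ 0} ≤ m)
    (hcol : ∀ j, #{i | N i j ≠ 0} ≤ m) (v : ι → ℝ) :
    ∑ i, (N *ᵥ v) i ^ 2 / d i ≤ m ^ 2 * ∑ j, d j * v j ^ 2 := by
  have hrow' (i : ι) : (N *ᵥ v) i ^ 2 ≤ m * ∑ j, N i j ^ 2 * v j ^ 2 := by
    have h := sq_sum_le_card_mul_sum_sq_of_support_subset (s := {j | N i j ≠ 0})
      (f := fun j => N i j * v j) fun j hj => by simp_all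
    simp only [mul_pow] at h
    exact h.trans (mul_le_mul_of_nonneg_right (by exact_mod_cast hrow i)
      (sum_nonneg fun j _ => by positivity))
  have hcol' (j : ι) : ∑ i, N i j ^ 2 / d i ≤ m * d j := by
    have h := sum_le_card_mul_of_support_subset (s := {i | N i j ≠ 0})
      (f := fun i => N i j ^ 2 / d i) (c := d j) (fun i hi => by simp_all)
      fun i _ => div_le_of_le_mul₀ (hd i).le (hd j).le (by linarith [hN i j])
    exact h.trans (mul_le_mul_of_nonneg_right (by exact_mod_cast hcol j) (hd j).le)
  calc ∑ i, (N *ᵥ v) i ^ 2 / d i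
      ≤ ∑ i, m * ∑ j, N i j ^ 2 * v j ^ 2 / d i := by
        refine sum_le_sum fun i _ => ?_
        rw [← sum_div, ← mul_div_assoc]
        exact div_le_div_of_nonneg_right (hrow' i) (hd i).le
    _ = m * ∑ j, v j ^ 2 * ∑ i, N i j ^ 2 / d i := by
        rw [← mul_sum, sum_comm]
        refine congrArg _ (sum_congr rfl fun j _ => ?_)
        rw [mul_sum]
        exact sum_congr rfl fun i _ => by ring
    _ ≤ m * ∑ j, v j ^ 2 * (m * d j) := by
        gcongr with j
        exact hcol' j
    _ = m ^ 2 * ∑ j, d j * v j ^ 2 := by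
        rw [mul_sum, mul_sum]
        exact sum_congr rfl fun j _ => by ring

end Real

section LowerPart

variable {ι R : Type*} [LinearOrder ι]

def lowerPart [Zero R] (A : Matrix ι ι R) : Matrix ι ι R :=
  of fun i j => if j ≤ i then A i j else 0

theorem diagonal_add_strictLowerPart_eq [DecidableEq ι] [AddZeroClass R] (A : Matrix ι ι R) :
    diagonal (fun i => A i i) + of (fun i j => if j < i then A i j else 0) = lowerPart A := by
  ext i j
  rcases lt_trichotomy j i with h | rfl | h
  · simp [lowerPart, diagonal_apply_ne _ h.ne', h, h.le]
  · simp [lowerPart]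
  · simp [lowerPart, diagonal_apply_ne _ h.ne, h.not_ge, h.not_gt]

theorem lowerPart_isLowerTriangular [Zero R] (A : Matrix ι ι R) :
    (lowerPart A).IsLowerTriangular :=
  fun _ _ h => if_neg (not_le.2 (OrderDual.toDual_lt_toDual.1 h))

theorem det_lowerPart [Fintype ι] [DecidableEq ι] [CommRing R] (A : Matrix ι ι R) :
    (lowerPart A).det = ∏ i, A i i := by
  rw [det_of_isLowerTriangular _ (lowerPart_isLowerTriangular A)]
  simp [lowerPart]

theorem lowerPart_add_transpose_sub_diagonal [DecidableEq ι] [AddCommGroup R]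
    {A : Matrix ι ι R} (hA : A.IsSymm) :
    A = lowerPart A + (lowerPart A)ᵀ - diagonal (fun i => A i i) := by
  ext i j
  rcases lt_trichotomy j i with h | rfl | h
  · simp [lowerPart, h.le, h.not_ge, h.ne']
  · simp [lowerPart]
  · simp [lowerPart, h.le, h.not_ge, h.ne, hA.apply i j]

theorem lowerPart_apply_eq_or_eq_zero [Zero R] (A : Matrix ι ι R) (i j : ι) :
    lowerPart A i j = A i j ∨ lowerPart A i j = 0 := by
  simp only [lowerPart, of_apply]
  split_ifs <;> simp

theorem PosDef.sum_sq_transpose_lowerPart_mulVec_div_le [Fintype ι] {A : Matrix ι ι ℝ}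
    {m : ℕ} (hA : A.PosDef) (hsparse : ∀ i, #{j | A i j ≠ 0} ≤ m) (v : ι → ℝ) :
    ∑ i, ((lowerPart A)ᵀ *ᵥ v) i ^ 2 / A i i ≤ m ^ 2 * ∑ i, A i i * v i ^ 2 := by
  have hsupp (i j : ι) (h : lowerPart A i j ≠ 0) : A i j ≠ 0 :=
    (lowerPart_apply_eq_or_eq_zero A i j).elim (· ▸ h) (absurd · h)
  refine sum_sq_mulVec_div_le (fun i => hA.diag_pos) (fun i j => ?_)
    (fun i => (card_le_card (monotone_filter_right _ fun j _ hj => ?_)).trans (hsparse i))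
    (fun j => (card_le_card (monotone_filter_right _ fun i _ hi => ?_)).trans (hsparse j)) v
  · rcases lowerPart_apply_eq_or_eq_zero A j i with h | h <;> rw [transpose_apply, h]
    · simpa [mul_comm] using hA.posSemidef.sq_apply_le j i
    · simpa using mul_nonneg hA.diag_pos.le hA.diag_pos.le
  · rw [← hA.isHermitian.apply i j, star_ne_zero]
    exact hsupp j i hj
  · exact hsupp j i hi

end LowerPart

end Matrix

/-- Jacobi–Gauss–Seidel symmetrization equivalence.  Let `Ã = D + L + Lᵀ`
be SPD with diagonal `D` and strictly lower-triangular part `L`, `S = (D+L)⁻¹` the forward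
Gauss–Seidel operator and `S̄ = Sᵀ + S − SᵀÃS` its symmetrization.  Then
`S̄ = (D+L)⁻ᵀ D (D+L)⁻¹`, `S̄` is SPD, and if each row of `Ã` has at most `N₀` nonzero
off-diagonal entries, the quadratic forms of `S̄⁻¹` and `D` are uniformly equivalent with a
constant `c(N₀)` depending only on `N₀`. -/
theorem stmt11 (N₀ : ℕ) :
    ∃ c : ℝ, 0 < c ∧
      ∀ (n : ℕ) (At : Matrix (Fin n) (Fin n) ℝ), At.PosDef →
        (∀ i : Fin n, {j : Fin n | j ≠ i ∧ At i j ≠ 0}.ncard ≤ N₀) →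
        ∀ (D L S Sb : Matrix (Fin n) (Fin n) ℝ),
          D = Matrix.diagonal (fun i => At i i) →
          L = Matrix.of (fun (i j : Fin n) => if (j : ℕ) < (i : ℕ) then At i j else 0) →
          S = (D + L)⁻¹ →
          Sb = Sᵀ + S - Sᵀ * At * S →
          Sb = ((D + L)⁻¹)ᵀ * D * (D + L)⁻¹ ∧
          Sb.PosDef ∧
          ∀ v : Fin n → ℝ,
            c⁻¹ * (v ⬝ᵥ D.mulVec v) ≤ v ⬝ᵥ Sb⁻¹.mulVec v ∧
            v ⬝ᵥ Sb⁻¹.mulVec v ≤ c * (v ⬝ᵥ D.mulVec v) := by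
  refine ⟨4 * ((N₀ : ℝ) + 1) ^ 2, by positivity, ?_⟩
  rintro n A hA hsparse D L S Sb rfl rfl rfl hSb
  have hd (i : Fin n) : 0 < A i i := hA.diag_pos
  -- `j < i` on `Fin n` unfolds to `(j : ℕ) < i`, so the general lemma applies as stated.
  have hB : diagonal (fun i => A i i) + of (fun i j : Fin n => if (j : ℕ) < i then A i j else 0)
      = lowerPart A := diagonal_add_strictLowerPart_eq A
  have hBdet : IsUnit (lowerPart A).det := by
    rw [det_lowerPart]
    exact (prod_pos fun i _ => hd i).ne'.isUnit
  have hAB := lowerPart_add_transpose_sub_diagonal (isHermitian_iff_isSymm.1 hA.isHermitian)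
  have hSb' : Sb = (lowerPart A)⁻¹ᵀ * diagonal (fun i => A i i) * (lowerPart A)⁻¹ :=
    (hB ▸ hSb).trans (symmetrization_inv_eq hAB hBdet)
  rw [hB]
  refine ⟨hSb', hSb' ▸ (posDef_diagonal_iff.2 hd).transpose_inv_mul_mul_inv hBdet, fun v => ?_⟩
  rw [hSb', inv_transpose_inv_mul_mul_inv _ hBdet,
    dotProduct_mul_inv_diagonal_mul_transpose_mulVec_self _ (fun i => (hd i).ne'),
    dotProduct_diagonal_mulVec_self]
  have hlower := hA.posSemidef.sum_mul_sq_le_four_mul_sum_sq_transpose_mulVec_div hAB hd v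
  have hupper := hA.sum_sq_transpose_lowerPart_mulVec_div_le
    (fun i => card_filter_le_succ_of_ncard_ne_le (hsparse i)) v
  have hP : 0 ≤ ∑ i, A i i * v i ^ 2 := sum_nonneg fun i _ => by have := hd i; positivity
  have hN₀ : (1 : ℝ) ≤ ((N₀ : ℝ) + 1) ^ 2 := by nlinarith [N₀.cast_nonneg (α := ℝ)]
  push_cast at hupper
  constructor
  · rw [inv_mul_le_iff₀ (by positivity)]
    nlinarith
  · nlinarith
end

section
/- (Nodal averaging on a pair of simplices.) Let τ⁺ and τ⁻ be two d-simplices in ℝ^d sharing a common (d−1)-face e, with shape-regularity constant γ₀ (ratio of circumradius to inradius bounded by γ₀) and diam comparable to h. Let v be piecewise affine on ω = τ⁺ ∪ τ⁻ (affine on each simplex), let z be a vertex of e, and let [v] = v|_{τ⁺} − v|_{τ⁻} denote the jump across e and Q the L²(e)-projection onto constants. Then |v|_{τ⁺}(z) − v|_{τ⁻}(z)| ≤ C ( h^{1−d/2} ‖∇v‖_{L²(ω)} + h^{1/2−d/2} ‖Q[v]‖_{L²(e)} ), with C depending only on d and γ₀. -/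
/-!
Both pieces are affine, so the jump `w = v⁺ - v⁻` is affine and its values on `e` differ from its
mean `Q[v]` by at most `(‖∇v⁺‖ + ‖∇v⁻‖) diam e`; hence `|w z| ≤ |Q[v]| + (‖∇v⁺‖ + ‖∇v⁻‖) h`.
Shape regularity puts a ball of radius `h / (2γ₀)` inside each simplex, so `|τ^±| ≳ h^d` and the
constant gradients satisfy `‖∇v^±‖ ≲ h^{-d/2} ‖∇v‖_{L²(ω)}`. Projecting the ball in `τ⁺` from the
vertex opposite to `e` onto `e` yields a `(d-1)`-dimensional ball of the same radius inside `e`,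
so `H^{d-1}(e) ≳ h^{d-1}` and `|Q[v]| ≲ h^{(1-d)/2} ‖Q[v]‖_{L²(e)}`.
-/

open MeasureTheory
open scoped RealInnerProductSpace

noncomputable section

/-- The inradius of a set: the supremum of radii of balls contained in it. -/
def inrad {d : ℕ} (s : Set (EuclideanSpace ℝ (Fin d))) : ℝ :=
  sSup {r : ℝ | ∃ c, Metric.ball c r ⊆ s}

open Set Metric Module

theorem exists_ball_subset_of_le_mul_inrad {d : ℕ} {s : Set (EuclideanSpace ℝ (Fin d))}
    {γ h : ℝ} (hγ : 0 < γ) (hh : 0 < h) (hs : h ≤ γ * inrad s) :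
    ∃ c, ball c (h / (2 * γ)) ⊆ s := by
  have hlt : h / (2 * γ) < inrad s := by rw [div_lt_iff₀ (by positivity)]; linarith
  obtain ⟨r, ⟨c, hc⟩, hr⟩ :=
    exists_lt_of_lt_csSup (s := {r | ∃ c, ball c r ⊆ s}) ⟨0, 0, by simp⟩ hlt
  exact ⟨c, (ball_subset_ball hr.le).trans hc⟩

theorem abs_le_of_ofReal_pow_mul_le {a G ρ h : ℝ} {k : ℕ} {m M : ENNReal} (hm₀ : m ≠ 0)
    (hm : m ≠ ⊤) (hM : M ≠ ⊤) (hρ : 0 < ρ) (hh : 0 < h)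
    (hmM : ENNReal.ofReal ((h / ρ) ^ k) * m ≤ M) (hG : a ^ 2 * M.toReal ≤ G) :
    |a| ≤ ρ ^ ((k : ℝ) / 2) / √m.toReal * (h ^ (-((k : ℝ) / 2)) * √G) := by
  have hm_pos : 0 < m.toReal := ENNReal.toReal_pos hm₀ hm
  have hmM' : m.toReal * (h / ρ) ^ k ≤ M.toReal := by
    have := ENNReal.toReal_mono hM hmM
    rwa [ENNReal.toReal_mul, ENNReal.toReal_ofReal (by positivity), mul_comm] at this
  have hsqrt : √((h / ρ) ^ k) = h ^ ((k : ℝ) / 2) / ρ ^ ((k : ℝ) / 2) := by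
    rw [Real.sqrt_eq_rpow, ← Real.rpow_natCast, ← Real.rpow_mul (by positivity),
      Real.div_rpow hh.le hρ.le, mul_one_div]
  have hlow : |a| * (√m.toReal * √((h / ρ) ^ k)) ≤ √G := by
    rw [← Real.sqrt_sq_eq_abs, ← Real.sqrt_mul (by positivity), ← Real.sqrt_mul (sq_nonneg a)]
    exact Real.sqrt_le_sqrt ((mul_le_mul_of_nonneg_left hmM' (sq_nonneg a)).trans hG)
  have hhk : 0 < h ^ ((k : ℝ) / 2) := by positivity
  have hρk : 0 < ρ ^ ((k : ℝ) / 2) := by positivity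
  calc |a| = ρ ^ ((k : ℝ) / 2) / √m.toReal * (h ^ (-((k : ℝ) / 2)) *
        (|a| * (√m.toReal * √((h / ρ) ^ k)))) := by
        rw [hsqrt, Real.rpow_neg hh.le]
        field_simp
    _ ≤ _ := by gcongr

theorem abs_le_of_sq_mul_measure_le_of_ball_subset {F : Type*} [NormedAddCommGroup F]
    [NormedSpace ℝ F] [MeasurableSpace F] [BorelSpace F] [FiniteDimensional ℝ F] (μ : Measure F)
    [μ.IsAddHaarMeasure] {T : Set F} (hT : IsCompact T) {c : F} {ρ h a G : ℝ} (hρ : 0 < ρ)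
    (hh : 0 < h) (hc : ball c (h / ρ) ⊆ T) (hG : a ^ 2 * (μ T).toReal ≤ G) :
    |a| ≤ ρ ^ ((finrank ℝ F : ℝ) / 2) / √(μ (ball 0 1)).toReal *
      (h ^ (-((finrank ℝ F : ℝ) / 2)) * √G) :=
  abs_le_of_ofReal_pow_mul_le (measure_ball_pos μ 0 one_pos).ne' measure_ball_lt_top.ne
    hT.measure_lt_top.ne hρ hh
    ((Measure.addHaar_ball_of_pos μ c (by positivity)).symm.trans_le (measure_mono hc)) hG

theorem AffineMap.abs_sub_le_norm_linear_mul {E : Type*} [NormedAddCommGroup E]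
    [NormedSpace ℝ E] [FiniteDimensional ℝ E] (f : E →ᵃ[ℝ] ℝ) (x y : E) :
    |f x - f y| ≤ ‖LinearMap.toContinuousLinearMap f.linear‖ * ‖x - y‖ := by
  have hf : f x - f y = LinearMap.toContinuousLinearMap f.linear (x - y) :=
    (f.linearMap_vsub x y).symm
  rw [hf, ← Real.norm_eq_abs]
  exact (LinearMap.toContinuousLinearMap f.linear).le_opNorm _

theorem AffineMap.abs_setAverage_sub_le {E : Type*} [NormedAddCommGroup E] [NormedSpace ℝ E]
    [FiniteDimensional ℝ E] [MeasurableSpace E] [BorelSpace E] (f : E →ᵃ[ℝ] ℝ)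
    {μ : Measure E} {s : Set E} (hs : IsCompact s) (h0 : μ s ≠ 0) (hfin : μ s ≠ ⊤) {z : E}
    (hz : z ∈ s) :
    |⨍ x in s, f x ∂μ - f z| ≤ ‖LinearMap.toContinuousLinearMap f.linear‖ * diam s := by
  have hf : Continuous f :=
    AffineMap.continuous_linear_iff.1 (LinearMap.continuous_of_finiteDimensional _)
  have hbound : ∀ x ∈ s, |f x - f z| ≤ ‖LinearMap.toContinuousLinearMap f.linear‖ * diam s :=
    fun x hx => (f.abs_sub_le_norm_linear_mul x z).trans <| by
      gcongr; rw [← dist_eq_norm]; exact dist_le_diam_of_mem hs.isBounded hx hz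
  obtain ⟨M, hM⟩ := hs.exists_bound_of_continuousOn hf.continuousOn
  have hint : IntegrableOn f s μ := Measure.integrableOn_of_bounded hfin
    hf.aestronglyMeasurable (ae_restrict_of_forall_mem hs.measurableSet hM)
  refine mem_closedBall.1 <| (convex_closedBall (f z) _).set_average_mem isClosed_closedBall h0
    hfin ?_ hint
  exact ae_restrict_of_forall_mem hs.measurableSet fun x hx => mem_closedBall.2 (hbound x hx)

theorem exists_affineMap_eq_one_of_notMem {𝕜 E : Type*} [Field 𝕜] [AddCommGroup E] [Module 𝕜 E]
    {s : AffineSubspace 𝕜 E} {a b : E} (hb : b ∈ s) (ha : a ∉ s) :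
    ∃ ℓ : E →ᵃ[𝕜] 𝕜, ℓ a = 1 ∧ ∀ x ∈ s, ℓ x = 0 := by
  have hab : a - b ∉ s.direction := fun h =>
    ha (by simpa using AffineSubspace.vadd_mem_of_mem_direction h hb)
  obtain ⟨f, hfa, hfs⟩ := Submodule.exists_dual_map_eq_bot_of_notMem hab inferInstance
  refine ⟨(f (a - b))⁻¹ • (f.toAffineMap - AffineMap.const 𝕜 E (f b)), ?_, fun x hx => ?_⟩
  · simp [← map_sub, inv_mul_cancel₀ hfa]
  · have : f (x - b) = 0 := (Submodule.eq_bot_iff _).1 hfs _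
      (Submodule.mem_map_of_mem (AffineSubspace.vsub_mem_direction hx hb))
    simp [← map_sub, this]

theorem homothety_mem_convexHull_of_mem_convexHull_insert {E : Type*} [AddCommGroup E]
    [Module ℝ E] {s : Set E} (hs : s.Nonempty) {a x : E} {ℓ : E →ᵃ[ℝ] ℝ} (ha : ℓ a = 1)
    (hℓs : ∀ y ∈ s, ℓ y = 0) (hx : x ∈ convexHull ℝ (insert a s)) (hlt : ℓ x < 1) :
    AffineMap.homothety a (1 - ℓ x)⁻¹ x ∈ convexHull ℝ s := by
  rw [convexHull_insert hs, mem_convexJoin] at hx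
  obtain ⟨_, ha', f, hf, hx⟩ := hx
  rw [mem_singleton_iff.1 ha', segment_eq_image_lineMap] at hx
  obtain ⟨t, -, rfl⟩ := hx
  have hℓf : ℓ f = 0 := convexHull_min (fun y hy => hℓs y hy)
    ((convex_singleton 0).affine_preimage ℓ) hf
  have hℓx : 1 - ℓ (AffineMap.lineMap a f t) = t := by
    rw [AffineMap.apply_lineMap, ha, hℓf, AffineMap.lineMap_apply_module]; ring
  have ht : t ≠ 0 := by linarith
  rwa [hℓx, ← AffineMap.homothety_eq_lineMap, ← AffineMap.homothety_mul_apply, inv_mul_cancel₀ ht,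
    AffineMap.homothety_one]

theorem AffineMap.lt_of_forall_mem_ball_le {E : Type*} [NormedAddCommGroup E]
    [NormedSpace ℝ E] (ℓ : E →ᵃ[ℝ] ℝ) {a b c : E} {r M : ℝ} (hab : ℓ b < ℓ a) (hr : 0 < r)
    (hM : ∀ x ∈ ball c r, ℓ x ≤ M) : ℓ c < M := by
  have hv : 0 < ‖a - b‖ := norm_pos_iff.2 (sub_ne_zero.2 fun h => hab.ne (h ▸ rfl))
  set ε := r / (2 * ‖a - b‖)
  have hε : 0 < ε := by positivity
  have hmem : c + ε • (a - b) ∈ ball c r := by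
    rw [mem_ball, dist_eq_norm, add_sub_cancel_left, norm_smul, Real.norm_eq_abs, abs_of_pos hε]
    simp only [ε]; field_simp; linarith
  have hval : ℓ (c + ε • (a - b)) = ℓ c + ε * (ℓ a - ℓ b) := by
    have := ℓ.map_vadd c (ε • (a - b))
    rw [map_smul, ← vsub_eq_sub, ℓ.linearMap_vsub] at this
    simpa [add_comm] using this
  nlinarith [hM _ hmem, mul_pos hε (sub_pos.2 hab)]

theorem exists_add_mem_convexHull_of_ball_subset {E : Type*} [NormedAddCommGroup E]
    [NormedSpace ℝ E] {s : Set E} (hs : s.Nonempty) {a c : E} {r : ℝ}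
    (ha : a ∉ affineSpan ℝ s) (hr : 0 < r) (hc : ball c r ⊆ convexHull ℝ (insert a s)) :
    ∃ y, ∀ w ∈ vectorSpan ℝ s, ‖w‖ < r → y + w ∈ convexHull ℝ s := by
  obtain ⟨b, hb⟩ := hs
  obtain ⟨ℓ, hℓa, hℓs⟩ := exists_affineMap_eq_one_of_notMem (subset_affineSpan ℝ s hb) ha
  -- `ℓ` is the barycentric coordinate of `a`; the homothety centred at `a` with ratio
  -- `(1 - ℓ c)⁻¹ ≥ 1` carries the slice of the ball through `c` parallel to `s` into
  -- `convexHull ℝ s`.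
  have hℓ_add : ∀ x, ∀ w ∈ vectorSpan ℝ s, ℓ (x + w) = ℓ x := by
    intro x w hw
    have hwb : w + b ∈ affineSpan ℝ s := AffineSubspace.vadd_mem_of_mem_direction
      (by rwa [direction_affineSpan]) (subset_affineSpan ℝ s hb)
    have h0 : ℓ.linear w = 0 := by
      simpa [hℓs _ hwb, hℓs _ (subset_affineSpan ℝ s hb)] using (ℓ.map_vadd b w).symm
    simpa [h0, add_comm] using ℓ.map_vadd x w
  have hℓT : ∀ x ∈ convexHull ℝ (insert a s), ℓ x ∈ Icc 0 1 := by
    refine fun x hx => convexHull_min ?_ ((convex_Icc 0 1).affine_preimage ℓ) hx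
    rintro y (rfl | hy)
    · simp [hℓa]
    · simp [hℓs y (subset_affineSpan ℝ s hy)]
  have hℓc : ℓ c < 1 := ℓ.lt_of_forall_mem_ball_le (b := b)
    (by rw [hℓa, hℓs b (subset_affineSpan ℝ s hb)]; exact one_pos) hr
    fun x hx => (hℓT x (hc hx)).2
  set t := (1 - ℓ c)⁻¹
  have ht : 1 ≤ t :=
    (one_le_inv₀ (by linarith)).2 (by linarith [(hℓT c (hc (mem_ball_self hr))).1])
  refine ⟨AffineMap.homothety a t c, fun w hw hwr => ?_⟩
  have hu : c + t⁻¹ • w ∈ ball c r := by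
    rw [mem_ball, dist_eq_norm, add_sub_cancel_left, norm_smul, Real.norm_eq_abs,
      abs_of_pos (by positivity)]
    exact lt_of_le_of_lt (mul_le_of_le_one_left (norm_nonneg w) (inv_le_one_of_one_le₀ ht)) hwr
  have hℓu : ℓ (c + t⁻¹ • w) = ℓ c := hℓ_add c _ (Submodule.smul_mem _ _ hw)
  have hproj := homothety_mem_convexHull_of_mem_convexHull_insert ⟨b, hb⟩ hℓa
    (fun y hy => hℓs y (subset_affineSpan ℝ s hy)) (hc hu) (hℓu ▸ hℓc)
  have hshift : AffineMap.homothety a t (c + t⁻¹ • w) = AffineMap.homothety a t c + w := by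
    simp only [AffineMap.homothety_apply, vsub_eq_sub, vadd_eq_add, smul_sub, smul_add, smul_smul,
      mul_inv_cancel₀ (by positivity : t ≠ 0), one_smul]
    abel
  rw [← hshift]
  rwa [hℓu] at hproj

section HausdorffMeasure

variable {E : Type*} [NormedAddCommGroup E] [InnerProductSpace ℝ E] {k : ℕ}

theorem Submodule.exists_isometry_euclideanSpace (V : Submodule ℝ E) [FiniteDimensional ℝ V]
    (hk : finrank ℝ V = k) (y : E) :
    ∃ ψ : EuclideanSpace ℝ (Fin k) → E, Isometry ψ ∧ ψ 0 = y ∧ range ψ = {x | x - y ∈ V} := by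
  subst hk
  set B := stdOrthonormalBasis ℝ V
  refine ⟨fun x => y + (B.repr.symm x : E),
    (IsometryEquiv.addLeft y).isometry.comp
      (V.subtypeₗᵢ.comp B.repr.symm.toLinearIsometry).isometry, by simp, ?_⟩
  ext x
  refine ⟨?_, fun hx => ⟨B.repr ⟨x - y, hx⟩, by simp⟩⟩
  rintro ⟨x, rfl⟩
  simp

variable [MeasurableSpace E] [BorelSpace E] {V : Submodule ℝ E} [FiniteDimensional ℝ V]

theorem ofReal_pow_mul_hausdorffMeasure_ball_le (hk : finrank ℝ V = k) {s : Set E} {y : E}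
    {r : ℝ} (hr : 0 < r) (hs : ∀ w ∈ V, ‖w‖ < r → y + w ∈ s) :
    ENNReal.ofReal (r ^ k) * μH[k] (ball (0 : EuclideanSpace ℝ (Fin k)) 1) ≤ μH[k] s := by
  obtain ⟨ψ, hψ, hψ0, hψV⟩ := V.exists_isometry_euclideanSpace hk y
  have hball : ψ '' ball 0 r ⊆ s := by
    rintro _ ⟨x, hx, rfl⟩
    have hxV : ψ x - y ∈ V := by
      have : ψ x ∈ range ψ := mem_range_self x
      rwa [hψV] at this
    have hxr : ‖ψ x - y‖ < r := by rwa [← dist_eq_norm, ← hψ0, hψ.dist_eq, ← mem_ball]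
    simpa using hs _ hxV hxr
  calc ENNReal.ofReal (r ^ k) * μH[k] (ball (0 : EuclideanSpace ℝ (Fin k)) 1)
      = μH[k] (ball (0 : EuclideanSpace ℝ (Fin k)) r) := by
        rw [Measure.addHaar_ball_of_pos _ _ hr, finrank_euclideanSpace_fin]
    _ = μH[k] (ψ '' ball 0 r) := (hψ.hausdorffMeasure_image (Or.inl k.cast_nonneg) _).symm
    _ ≤ μH[k] s := measure_mono hball

theorem hausdorffMeasure_lt_top_of_isBounded (hk : finrank ℝ V = k) {s : Set E} {y : E}
    (hs : Bornology.IsBounded s) (hsV : ∀ x ∈ s, x - y ∈ V) : μH[k] s < ⊤ := by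
  obtain ⟨ψ, hψ, -, hψV⟩ := V.exists_isometry_euclideanSpace hk y
  have hsψ : s ⊆ range ψ := by rw [hψV]; exact hsV
  calc μH[k] s = μH[k] (ψ ⁻¹' s) := by
        rw [hψ.hausdorffMeasure_preimage (Or.inl k.cast_nonneg), inter_eq_left.2 hsψ]
    _ < ⊤ := (hψ.antilipschitz.isBounded_preimage hs).measure_lt_top

theorem AffineIndependent.hausdorffMeasure_convexHull_lt_top {ι : Type*} [Fintype ι]
    {f : ι → E} (hf : AffineIndependent ℝ f) (hk : Fintype.card ι = k + 1) :
    μH[k] (convexHull ℝ (range f)) < ⊤ := by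
  obtain ⟨i⟩ : Nonempty ι := Fintype.card_pos_iff.1 (by omega)
  refine hausdorffMeasure_lt_top_of_isBounded (hf.finrank_vectorSpan hk) (y := f i)
    ((finite_range f).isCompact_convexHull ℝ |>.isBounded) fun x hx => ?_
  rw [← direction_affineSpan]
  exact AffineSubspace.vsub_mem_direction (convexHull_subset_affineSpan _ hx)
    (subset_affineSpan ℝ _ (mem_range_self i))

end HausdorffMeasure

theorem AffineIndependent.ofReal_pow_mul_le_hausdorffMeasure_facet {E : Type*}
    [NormedAddCommGroup E] [InnerProductSpace ℝ E] [MeasurableSpace E] [BorelSpace E] {n : ℕ}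
    [NeZero n] {q : Fin (n + 1) → E} (hq : AffineIndependent ℝ q) {c : E} {r : ℝ} (hr : 0 < r)
    (hc : ball c r ⊆ convexHull ℝ (range q)) :
    ENNReal.ofReal (r ^ (n - 1)) * μH[(n - 1 : ℕ)] (ball (0 : EuclideanSpace ℝ (Fin (n - 1))) 1) ≤
      μH[(n - 1 : ℕ)] (convexHull ℝ (range (q ∘ Fin.succ))) := by
  have ha : q 0 ∉ affineSpan ℝ (range (q ∘ Fin.succ)) := by
    simpa [range_comp, compl_eq_univ_sdiff] using hq.notMem_affineSpan_sdiff 0 univ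
  rw [Fin.range_fin_succ] at hc
  obtain ⟨y, hy⟩ := exists_add_mem_convexHull_of_ball_subset (range_nonempty _) ha hr hc
  refine ofReal_pow_mul_hausdorffMeasure_ball_le
    ((hq.comp_embedding (Fin.succEmb n)).finrank_vectorSpan ?_) hr hy
  simp [Nat.sub_add_cancel NeZero.one_le]

theorem AffineIndependent.abs_apply_le_of_mem_facet {E : Type*} [NormedAddCommGroup E]
    [InnerProductSpace ℝ E] [FiniteDimensional ℝ E] [MeasurableSpace E] [BorelSpace E] {n : ℕ}
    [NeZero n] {q : Fin (n + 1) → E} (hq : AffineIndependent ℝ q) {c : E} {ρ h : ℝ} (hρ : 0 < ρ)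
    (hh : 0 < h) (hc : ball c (h / ρ) ⊆ convexHull ℝ (range q)) (f : E →ᵃ[ℝ] ℝ) {z : E}
    (hz : z ∈ convexHull ℝ (range (q ∘ Fin.succ))) :
    |f z| ≤ ‖LinearMap.toContinuousLinearMap f.linear‖ * diam (convexHull ℝ (range q)) +
      ρ ^ (((n - 1 : ℕ) : ℝ) / 2) /
        √(μH[((n - 1 : ℕ) : ℝ)] (ball (0 : EuclideanSpace ℝ (Fin (n - 1))) 1)).toReal *
        (h ^ (-(((n - 1 : ℕ) : ℝ) / 2)) *
          √((⨍ x in convexHull ℝ (range (q ∘ Fin.succ)), f x ∂μH[((n - 1 : ℕ) : ℝ)]) ^ 2 *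
            (μH[((n - 1 : ℕ) : ℝ)] (convexHull ℝ (range (q ∘ Fin.succ)))).toReal)) := by
  set F := convexHull ℝ (range (q ∘ Fin.succ))
  set Q := ⨍ x in F, f x ∂μH[((n - 1 : ℕ) : ℝ)]
  have hF_fin : μH[((n - 1 : ℕ) : ℝ)] F < ⊤ :=
    (hq.comp_embedding (Fin.succEmb n)).hausdorffMeasure_convexHull_lt_top
      (by simp [Nat.sub_add_cancel NeZero.one_le])
  have hF_low := hq.ofReal_pow_mul_le_hausdorffMeasure_facet (by positivity) hc
  have hF_pos : μH[((n - 1 : ℕ) : ℝ)] F ≠ 0 := (lt_of_lt_of_le (ENNReal.mul_pos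
    (by simp; positivity) (measure_ball_pos _ _ one_pos).ne') hF_low).ne'
  have hF_diam : diam F ≤ diam (convexHull ℝ (range q)) :=
    diam_mono (convexHull_mono (range_comp_subset_range _ _))
      ((finite_range q).isCompact_convexHull ℝ).isBounded
  have hosc := f.abs_setAverage_sub_le ((finite_range _).isCompact_convexHull ℝ) hF_pos hF_fin.ne hz
  have hmean := abs_le_of_ofReal_pow_mul_le (measure_ball_pos _ _ one_pos).ne'
    measure_ball_lt_top.ne hF_fin.ne hρ hh hF_low (a := Q) le_rfl
  calc |f z| ≤ |Q - f z| + |Q| := by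
        simpa [abs_sub_comm] using abs_sub_abs_le_abs_sub (f z) Q
    _ ≤ _ := add_le_add (hosc.trans (by gcongr)) hmean

theorem stmt14_general (d : ℕ) (γ₀ : ℝ) (hγ₀ : 0 < γ₀) :
    ∃ C : ℝ, 0 < C ∧
      ∀ (h : ℝ), 0 < h →
      ∀ p : Fin (d + 2) → EuclideanSpace ℝ (Fin d),
        AffineIndependent ℝ (p ∘ Fin.castSucc) →
        AffineIndependent ℝ (p ∘ Fin.succ) →
        ∀ (Tp Tm e : Set (EuclideanSpace ℝ (Fin d))),
          Tp = convexHull ℝ (Set.range (p ∘ Fin.castSucc)) →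
          Tm = convexHull ℝ (Set.range (p ∘ Fin.succ)) →
          e = convexHull ℝ (Set.range fun j : Fin d => p j.castSucc.succ) →
          Disjoint (interior Tp) (interior Tm) →
          Metric.diam Tp ≤ h → Metric.diam Tm ≤ h →
          h ≤ γ₀ * inrad Tp → h ≤ γ₀ * inrad Tm →
          ∀ (vp vm : EuclideanSpace ℝ (Fin d) →ᵃ[ℝ] ℝ) (j : Fin d),
            -- squared broken-gradient norm over ω (gradients of affine maps are constant)
            ∀ (gradsq : ℝ),
              gradsq =
                ‖LinearMap.toContinuousLinearMap vp.linear‖ ^ 2 * (volume Tp).toReal +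
                ‖LinearMap.toContinuousLinearMap vm.linear‖ ^ 2 * (volume Tm).toReal →
            -- the mean value of the jump over e
            ∀ (Qm : ℝ),
              Qm = ((Measure.hausdorffMeasure ((d : ℝ) - 1) e).toReal)⁻¹ *
                ∫ x in e, (vp x - vm x) ∂(Measure.hausdorffMeasure ((d : ℝ) - 1)) →
            |vp (p j.castSucc.succ) - vm (p j.castSucc.succ)| ≤
              C * (h ^ ((1 : ℝ) - d / 2) * Real.sqrt gradsq +
                h ^ ((1 : ℝ) / 2 - d / 2) *
                  Real.sqrt (Qm ^ 2 *
                    (Measure.hausdorffMeasure ((d : ℝ) - 1) e).toReal)) := by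
  set κ := (volume (ball (0 : EuclideanSpace ℝ (Fin d)) 1)).toReal
  set C₁ := (2 * γ₀) ^ ((d : ℝ) / 2) / √κ
  set C₂ := (2 * γ₀) ^ (((d - 1 : ℕ) : ℝ) / 2) /
    √(μH[((d - 1 : ℕ) : ℝ)] (ball (0 : EuclideanSpace ℝ (Fin (d - 1))) 1)).toReal
  have hκ : 0 < κ := ENNReal.toReal_pos (measure_ball_pos _ _ one_pos).ne' measure_ball_lt_top.ne
  refine ⟨2 * C₁ + C₂, by positivity, ?_⟩
  rintro h hh p hp - Tp Tm e hTp hTm rfl - hdiam - hinp hinm vp vm j gradsq hgrad Qm hQm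
  have : NeZero d := ⟨j.pos.ne'⟩
  have hρ : 0 < 2 * γ₀ := by positivity
  obtain ⟨cp, hcp⟩ := exists_ball_subset_of_le_mul_inrad hγ₀ hh hinp
  obtain ⟨cm, hcm⟩ := exists_ball_subset_of_le_mul_inrad hγ₀ hh hinm
  set Lp := LinearMap.toContinuousLinearMap vp.linear
  set Lm := LinearMap.toContinuousLinearMap vm.linear
  have hgp : ‖Lp‖ ≤ C₁ * (h ^ (-((d : ℝ) / 2)) * √gradsq) := by
    simpa using abs_le_of_sq_mul_measure_le_of_ball_subset volume
      (hTp ▸ (finite_range _).isCompact_convexHull ℝ) hρ hh hcp (a := ‖Lp‖)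
      (hgrad ▸ le_add_of_nonneg_right (by positivity))
  have hgm : ‖Lm‖ ≤ C₁ * (h ^ (-((d : ℝ) / 2)) * √gradsq) := by
    simpa using abs_le_of_sq_mul_measure_le_of_ball_subset volume
      (hTm ▸ (finite_range _).isCompact_convexHull ℝ) hρ hh hcm (a := ‖Lm‖)
      (hgrad ▸ le_add_of_nonneg_left (by positivity))
  have hjump := hp.abs_apply_le_of_mem_facet hρ hh (hTp ▸ hcp) (vp - vm)
    (subset_convexHull ℝ _ (mem_range_self j))
  have hLjump : ‖LinearMap.toContinuousLinearMap (vp - vm).linear‖ ≤ ‖Lp‖ + ‖Lm‖ := by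
    rw [AffineMap.sub_linear, map_sub]; exact norm_sub_le _ _
  rw [← hTp] at hjump
  rw [← Nat.cast_pred j.pos] at hQm ⊢
  set e := convexHull ℝ (range fun j : Fin d => p j.castSucc.succ)
  obtain rfl : Qm = ⨍ x in e, (vp - vm) x ∂μH[((d - 1 : ℕ) : ℝ)] := by
    rw [hQm, setAverage_eq, smul_eq_mul]; rfl
  set Y := h ^ (-(((d - 1 : ℕ) : ℝ) / 2)) *
    √((⨍ x in e, (vp - vm) x ∂μH[((d - 1 : ℕ) : ℝ)]) ^ 2 * (μH[((d - 1 : ℕ) : ℝ)] e).toReal)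
  have hexp1 : h ^ ((1 : ℝ) - d / 2) = h * h ^ (-((d : ℝ) / 2)) := by
    rw [sub_eq_add_neg, Real.rpow_add hh, Real.rpow_one]
  have hexp2 : h ^ ((1 : ℝ) / 2 - d / 2) = h ^ (-(((d - 1 : ℕ) : ℝ) / 2)) := by
    rw [Nat.cast_pred j.pos]; ring_nf
  rw [hexp1, hexp2]
  calc _ ≤ (‖Lp‖ + ‖Lm‖) * h + C₂ * Y :=
        hjump.trans (add_le_add (mul_le_mul hLjump hdiam diam_nonneg (by positivity)) le_rfl)
    _ ≤ (2 * C₁ + C₂) * (h * h ^ (-((d : ℝ) / 2)) * √gradsq + Y) := by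
      have hA : 0 ≤ h ^ (-((d : ℝ) / 2)) * √gradsq := by positivity
      have hC₁ : 0 ≤ C₁ := by positivity
      have hC₂ : 0 ≤ C₂ := by positivity
      nlinarith [mul_nonneg hC₁ (show 0 ≤ Y by positivity), mul_nonneg hC₂ (mul_nonneg hh.le hA)]

/-- nodal averaging on a pair of simplices.  Let `τ⁺, τ⁻` be two
`d`-simplices in `ℝ^d` (vertex lists `p∘castSucc` and `p∘succ`) sharing the common
`(d−1)`-face `e = conv{p₁,…,p_d}`, with disjoint interiors, diameters `≤ h` and inradii
`≥ h/γ₀` (shape regularity and diameter comparable to `h`).  Let `v` be piecewise affine on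
`ω = τ⁺ ∪ τ⁻` (pieces `v⁺, v⁻`), `z = p_j` a vertex of `e`, and `Q[v]` the mean of the jump
`v⁺ − v⁻` over `e` w.r.t. the `(d−1)`-dimensional Hausdorff measure.  Then
`|v⁺(z) − v⁻(z)| ≤ C (h^{1−d/2}‖∇v‖_{L²(ω)} + h^{1/2−d/2}‖Q[v]‖_{L²(e)})`,
with `C` depending only on `d` and `γ₀`. -/
theorem stmt14 (d : ℕ) (hd : 1 ≤ d) (γ₀ : ℝ) (hγ₀ : 0 < γ₀) :
    ∃ C : ℝ, 0 < C ∧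
      ∀ (h : ℝ), 0 < h →
      ∀ p : Fin (d + 2) → EuclideanSpace ℝ (Fin d),
        AffineIndependent ℝ (p ∘ Fin.castSucc) →
        AffineIndependent ℝ (p ∘ Fin.succ) →
        ∀ (Tp Tm e : Set (EuclideanSpace ℝ (Fin d))),
          Tp = convexHull ℝ (Set.range (p ∘ Fin.castSucc)) →
          Tm = convexHull ℝ (Set.range (p ∘ Fin.succ)) →
          e = convexHull ℝ (Set.range fun j : Fin d => p j.castSucc.succ) →
          Disjoint (interior Tp) (interior Tm) →
          Metric.diam Tp ≤ h → Metric.diam Tm ≤ h →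
          h ≤ γ₀ * inrad Tp → h ≤ γ₀ * inrad Tm →
          ∀ (vp vm : EuclideanSpace ℝ (Fin d) →ᵃ[ℝ] ℝ) (j : Fin d),
            -- squared broken-gradient norm over ω (gradients of affine maps are constant)
            ∀ (gradsq : ℝ),
              gradsq =
                ‖LinearMap.toContinuousLinearMap vp.linear‖ ^ 2 * (volume Tp).toReal +
                ‖LinearMap.toContinuousLinearMap vm.linear‖ ^ 2 * (volume Tm).toReal →
            -- the mean value of the jump over e
            ∀ (Qm : ℝ),
              Qm = ((Measure.hausdorffMeasure ((d : ℝ) - 1) e).toReal)⁻¹ *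
                ∫ x in e, (vp x - vm x) ∂(Measure.hausdorffMeasure ((d : ℝ) - 1)) →
            |vp (p j.castSucc.succ) - vm (p j.castSucc.succ)| ≤
              C * (h ^ ((1 : ℝ) - d / 2) * Real.sqrt gradsq +
                h ^ ((1 : ℝ) / 2 - d / 2) *
                  Real.sqrt (Qm ^ 2 *
                    (Measure.hausdorffMeasure ((d : ℝ) - 1) e).toReal)) :=
  stmt14_general d γ₀ hγ₀
end
end
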